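/- Under the assumptions of the main S-DANE theorem (each f_i μ-convex with μ > 0, {f_i} with δ-SOD, δ > 0, λ = 2δ, accuracy condition Σ_{i=1}^n ‖∇F_{i,r}(x_{i,r+1})‖² ≤ (λ²/4) Σ_{i=1}^n ‖x_{i,r+1} − v^r‖² at every round), let x* minimize f, D := ‖x⁰ − x*‖, and let x̄^R be the weighted average of the iterates with weights p^r, p := 1 + μ/λ. Then for any ε > 0, if the number of rounds R satisfies R ≥ ((μ + 2δ)/μ) · ln(1 + μD²/(2ε)), it holds that f(x̄^R) − f(x*) ≤ ε. -/

import Mathlib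

/-!
One round of S-DANE decreases the potential `(λ/2)‖v - x*‖²` in the sense that
`f(x^{r+1}) - f(x*) ≤ (λ/2)‖v^r - x*‖² - ((λ+μ)/2)‖v^{r+1} - x*‖²`. To see it, add the
`μ`-convexity inequalities of the `f_i` between their local points `x_{i,r+1}`, the mean
`x^{r+1}` and `x*`. What remains besides the potential terms are inner products of the
drifts `∇h_i(x^{r+1}) - ∇h_i(v^r)` (controlled by `δ`-SOD) and of the local residuals
`∇F_{i,r}(x_{i,r+1})` (controlled by the accuracy condition) against `x_{i,r+1} - x^{r+1}`;
Young's inequality absorbs them, exactly when `λ = 2δ`.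

With `p = (λ+μ)/λ`, weighting round `r` by `p^r` makes these bounds telescope, and convexity
of `f` moves the weighted sum to `x̄^R`: `(p^R - 1)(f(x̄^R) - f(x*)) ≤ μD²/2`. Finally
`log p ≥ 1 - 1/p = μ/(λ+μ)` turns the bound on `R` into `p^R ≥ 1 + μD²/(2ε)`.
-/

open Finset RealInnerProductSpace

lemma sum_sub_smul_sum_eq_zero {M : Type*} [AddCommGroup M] [Module ℝ M] {ι : Type*}
    [Fintype ι] [Nonempty ι] (x : ι → M) :
    ∑ i, (x i - (1 / (Fintype.card ι : ℝ)) • ∑ j, x j) = 0 := by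
  rw [sum_sub_distrib, sum_const, card_univ, ← Nat.cast_smul_eq_nsmul ℝ, smul_smul,
    mul_one_div_cancel (Nat.cast_ne_zero.mpr Fintype.card_ne_zero), one_smul, sub_self]

lemma sum_pow_mul_add_le_of_le {a b : ℕ → ℝ} {c p : ℝ} (hp : 0 ≤ p)
    (h : ∀ r, a (r + 1) ≤ c * b r - c * p * b (r + 1)) (R : ℕ) :
    ∑ r ∈ Icc 1 R, p ^ r * a r + c * p ^ (R + 1) * b R ≤ c * p * b 0 := by
  induction R with
  | zero => simp
  | succ R ih =>
    rw [sum_Icc_succ_top (by omega)]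
    have := mul_le_mul_of_nonneg_left (h R) (pow_nonneg hp (R + 1))
    linarith [show p ^ (R + 1) * (c * b R - c * p * b (R + 1))
      = c * p ^ (R + 1) * b R - c * p ^ (R + 1 + 1) * b (R + 1) by ring]

lemma le_pow_of_mul_log_le {p A : ℝ} {R : ℕ} (hp : 1 < p) (hA : 0 < A)
    (h : p / (p - 1) * Real.log A ≤ R) : A ≤ p ^ R := by
  have hp0 : 0 < p := by linarith
  rw [← Real.log_le_log_iff hA (pow_pos hp0 R), Real.log_pow]
  have hlog : (p - 1) / p ≤ Real.log p := by
    simpa [sub_div, div_self hp0.ne'] using Real.one_sub_inv_le_log_of_pos hp0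
  calc Real.log A = (p - 1) / p * (p / (p - 1) * Real.log A) := by
        field_simp [(sub_pos.mpr hp).ne']
    _ ≤ (p - 1) / p * R := by gcongr
    _ ≤ R * Real.log p := by rw [mul_comm]; gcongr

section InnerProduct

variable {E : Type*} [NormedAddCommGroup E] {ι : Type*} [Fintype ι]

lemma norm_sum_sq_le_card_mul_sum_norm_sq (g : ι → E) :
    ‖∑ i, g i‖ ^ 2 ≤ Fintype.card ι * ∑ i, ‖g i‖ ^ 2 := by
  calc ‖∑ i, g i‖ ^ 2 ≤ (∑ i, ‖g i‖) ^ 2 := by gcongr; exact norm_sum_le _ _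
    _ ≤ Fintype.card ι * ∑ i, ‖g i‖ ^ 2 := by
      simpa using sq_sum_le_card_mul_sum_sq (s := univ) (f := fun i => ‖g i‖)

variable [InnerProductSpace ℝ E]

lemma real_inner_sub_sub_eq (a b c : E) :
    ⟪a - b, a - c⟫ = (‖a - b‖ ^ 2 + ‖a - c‖ ^ 2 - ‖b - c‖ ^ 2) / 2 := by
  rw [show b - c = (a - c) - (a - b) by abel, norm_sub_sq_real (a - c), real_inner_comm]
  ring

lemma two_mul_sum_inner_le (u w : ι → E) (c : ℝ) :
    2 * c * ∑ i, ⟪u i, w i⟫ ≤ ∑ i, ‖u i‖ ^ 2 + c ^ 2 * ∑ i, ‖w i‖ ^ 2 := by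
  have young : ∀ i, 2 * c * ⟪u i, w i⟫ ≤ ‖u i‖ ^ 2 + c ^ 2 * ‖w i‖ ^ 2 := fun i => by
    have := norm_sub_sq_real (u i) (c • w i)
    rw [real_inner_smul_right, norm_smul, mul_pow, Real.norm_eq_abs, sq_abs] at this
    linarith [sq_nonneg ‖u i - c • w i‖]
  simpa only [mul_sum, ← sum_add_distrib] using sum_le_sum fun i _ => young i

lemma sum_norm_sub_sq_of_sum_sub_eq_zero (x : ι → E) {z : E} (hz : ∑ i, (x i - z) = 0)
    (c : E) :
    ∑ i, ‖x i - c‖ ^ 2 = ∑ i, ‖x i - z‖ ^ 2 + Fintype.card ι * ‖z - c‖ ^ 2 := by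
  have split : ∀ i, ‖x i - c‖ ^ 2 = ‖x i - z‖ ^ 2 + 2 * ⟪x i - z, z - c⟫ + ‖z - c‖ ^ 2 :=
    fun i => by rw [← norm_add_sq_real, sub_add_sub_cancel]
  simp only [split, sum_add_distrib, ← mul_sum, ← sum_inner, hz, inner_zero_left, sum_const,
    card_univ, nsmul_eq_mul]
  ring

lemma sum_mul_le_sum_mul_of_subgradient {κ : Type*} {φ : E → ℝ} {g c : E}
    (hφ : ∀ b, φ c + ⟪g, b - c⟫ ≤ φ b) (s : Finset κ) {w : κ → ℝ} (hw : ∀ k ∈ s, 0 ≤ w k)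
    {x : κ → E} (hc : (∑ k ∈ s, w k) • c = ∑ k ∈ s, w k • x k) :
    (∑ k ∈ s, w k) * φ c ≤ ∑ k ∈ s, w k * φ (x k) := by
  have hsum := sum_le_sum fun k hk => mul_le_mul_of_nonneg_left (hφ (x k)) (hw k hk)
  have hinner : ∑ k ∈ s, w k * ⟪g, x k - c⟫ = 0 := by
    simp only [← real_inner_smul_right, ← inner_sum, smul_sub, sum_sub_distrib, ← sum_smul, hc,
      sub_self, inner_zero_right]
  simpa only [mul_add, sum_add_distrib, hinner, add_zero, sum_mul] using hsum

lemma weighted_average_rate {φ : E → ℝ} {g : E → E} (hφ : ∀ a b, φ a + ⟪g a, b - a⟫ ≤ φ b)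
    {lam μ p : ℝ} (hlam : 0 < lam) (hμ : 0 ≤ μ) (hp : p = 1 + μ / lam) {x v : ℕ → E} {y : E}
    (hdesc : ∀ r, φ (x (r + 1)) - φ y
      ≤ lam / 2 * ‖v r - y‖ ^ 2 - (lam + μ) / 2 * ‖v (r + 1) - y‖ ^ 2)
    {R : ℕ} (hR : 1 ≤ R) :
    (p ^ R - 1) * (φ ((∑ r ∈ Icc 1 R, p ^ r)⁻¹ • ∑ r ∈ Icc 1 R, p ^ r • x r) - φ y)
      ≤ μ / 2 * ‖v 0 - y‖ ^ 2 := by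
  have hp0 : 0 < p := by rw [hp]; positivity
  have hlp : lam * (p - 1) = μ := by rw [hp]; field_simp; ring
  have hP : 0 < ∑ r ∈ Icc 1 R, p ^ r :=
    sum_pos (fun r _ => pow_pos hp0 r) (nonempty_Icc.mpr hR)
  have hjensen := sum_mul_le_sum_mul_of_subgradient (hφ _) (Icc 1 R)
    (fun r _ => (pow_pos hp0 r).le) (smul_inv_smul₀ hP.ne' (∑ r ∈ Icc 1 R, p ^ r • x r))
  have htele := sum_pow_mul_add_le_of_le (a := fun r => φ (x r) - φ y)
    (b := fun r => ‖v r - y‖ ^ 2) (c := lam / 2) hp0.le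
    (fun r => (hdesc r).trans_eq (by rw [← hlp]; ring)) R
  have hgeom : (∑ r ∈ Icc 1 R, p ^ r) * (p - 1) = p * (p ^ R - 1) := by
    rw [← Ico_add_one_right_eq_Icc, geom_sum_Ico_mul _ (by omega)]; ring
  simp only [mul_sub, sum_sub_distrib, ← sum_mul] at htele
  set P := ∑ r ∈ Icc 1 R, p ^ r
  set gap := φ (P⁻¹ • ∑ r ∈ Icc 1 R, p ^ r • x r) - φ y
  have hgap : P * gap ≤ lam / 2 * p * ‖v 0 - y‖ ^ 2 := by
    have : 0 ≤ lam / 2 * p ^ (R + 1) * ‖v R - y‖ ^ 2 := by positivity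
    rw [mul_sub]; linarith
  have hp1 : 0 ≤ p - 1 := by rw [hp, add_sub_cancel_left]; positivity
  refine le_of_mul_le_mul_left ?_ hp0
  calc p * ((p ^ R - 1) * gap) = (p - 1) * (P * gap) := by linear_combination -gap * hgeom
    _ ≤ (p - 1) * (lam / 2 * p * ‖v 0 - y‖ ^ 2) := mul_le_mul_of_nonneg_left hgap hp1
    _ = p * (μ / 2 * ‖v 0 - y‖ ^ 2) := by rw [← hlp]; ring

end InnerProduct

section Round

variable {E : Type*} [NormedAddCommGroup E] [InnerProductSpace ℝ E] {ι : Type*} [Fintype ι]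
  {φ : ι → E → ℝ} {G : ι → E → E} {GF : E → E} {μ lam : ℝ}

lemma sum_sub_le_of_strongConvex
    (hconv : ∀ i a b, φ i a + ⟪G i a, b - a⟫ + μ / 2 * ‖a - b‖ ^ 2 ≤ φ i b)
    (x : ι → E) (z y : E) :
    ∑ i, φ i z - ∑ i, φ i y ≤ ∑ i, ⟪G i (x i), x i - y⟫ - ∑ i, ⟪G i z, x i - z⟫
      - μ / 2 * (∑ i, ‖x i - z‖ ^ 2 + ∑ i, ‖x i - y‖ ^ 2) := by
  have h : ∀ i, φ i z - φ i y ≤ ⟪G i (x i), x i - y⟫ - ⟪G i z, x i - z⟫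
      - μ / 2 * (‖x i - z‖ ^ 2 + ‖x i - y‖ ^ 2) := fun i => by
    have hz := hconv i z (x i)
    have hy := hconv i (x i) y
    rw [norm_sub_rev] at hz
    rw [← neg_sub, inner_neg_right] at hy
    linarith
  have hsum := sum_le_sum fun i (_ : i ∈ univ) => h i
  simpa only [sum_sub_distrib, ← mul_sum, sum_add_distrib] using hsum

lemma sum_inner_sub_sum_inner_eq (hGF : ∀ y, ∑ i, (G i y - GF y) = 0) {x : ι → E} {z : E}
    (hz : ∑ i, (x i - z) = 0) {v : E} {g : ι → E}
    (hg : ∀ i, g i = G i (x i) + GF v - G i v + lam • (x i - v)) (y : E) :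
    ∑ i, ⟪G i (x i), x i - y⟫ - ∑ i, ⟪G i z, x i - z⟫
      = ∑ i, ⟪(GF z - G i z) - (GF v - G i v) + g i, x i - z⟫ + ⟪∑ i, g i, z - y⟫
        - lam * ∑ i, ⟪x i - v, x i - y⟫ := by
  have h : ∀ i, ⟪G i (x i), x i - y⟫ - ⟪G i z, x i - z⟫
      - ⟪(GF z - G i z) - (GF v - G i v) + g i, x i - z⟫ + lam * ⟪x i - v, x i - y⟫
      = ⟪g i, z - y⟫ + ⟪G i v - GF v, z - y⟫ - ⟪GF z, x i - z⟫ := fun i => by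
    rw [hg]
    simp only [inner_add_left, inner_sub_left, inner_sub_right, real_inner_smul_left]
    ring
  have hsum := sum_congr rfl fun i (_ : i ∈ univ) => h i
  rw [sum_sub_distrib, sum_add_distrib, sum_sub_distrib, sum_sub_distrib, sum_add_distrib,
    ← sum_inner, ← sum_inner, ← inner_sum, hGF, hz, inner_zero_left, inner_zero_right,
    ← mul_sum] at hsum
  linarith

lemma sum_eq_card_mul_smul_sub (hGF : ∀ y, ∑ i, (G i y - GF y) = 0) {x : ι → E} {z : E}
    (hz : ∑ i, (x i - z) = 0) {v v' : E} {g : ι → E}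
    (hg : ∀ i, g i = G i (x i) + GF v - G i v + lam • (x i - v)) (hN : Fintype.card ι ≠ 0)
    (hlm : lam + μ ≠ 0)
    (hv' : v' = (lam + μ)⁻¹ •
      (lam • v + μ • z - (1 / (Fintype.card ι : ℝ)) • ∑ i, G i (x i))) :
    ∑ i, g i = (Fintype.card ι * (lam + μ)) • (z - v') := by
  have hN' : (Fintype.card ι : ℝ) ≠ 0 := Nat.cast_ne_zero.mpr hN
  have hsum : ∑ i, g i = ∑ i, G i (x i) - ∑ i, (G i v - GF v)
      + lam • ∑ i, ((x i - z) + (z - v)) := by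
    rw [smul_sum, ← sum_sub_distrib, ← sum_add_distrib]
    exact sum_congr rfl fun i _ => by rw [hg]; module
  rw [hsum, sum_add_distrib, hGF, hz, sum_const, card_univ, ← Nat.cast_smul_eq_nsmul ℝ, hv',
    smul_sub (_ * _) z, smul_smul, mul_assoc, mul_inv_cancel₀ hlm, mul_one, mul_smul,
    smul_sub _ (_ + _), smul_smul _ (1 / _), mul_one_div_cancel hN', one_smul]
  module

lemma sum_inner_add_le [Nonempty ι] (hlam : 0 < lam) (hμ : 0 ≤ μ) {d g w : ι → E} {u : E}
    {T : ℝ} (hd : ∑ i, ‖d i‖ ^ 2 ≤ lam ^ 2 / 4 * T)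
    (hg : ∑ i, ‖g i‖ ^ 2 ≤ lam ^ 2 / 4 * (∑ i, ‖w i‖ ^ 2 + T))
    (hu : ∑ i, g i = (Fintype.card ι * (lam + μ)) • u) :
    ∑ i, ⟪d i + g i, w i⟫ + Fintype.card ι * (lam + μ) / 2 * ‖u‖ ^ 2
      ≤ lam / 2 * (∑ i, ‖w i‖ ^ 2 + T) + lam / 2 * ∑ i, ‖w i‖ ^ 2 := by
  set N : ℝ := (Fintype.card ι : ℝ)
  set W := ∑ i, ‖w i‖ ^ 2
  have hN : 0 < N := Nat.cast_pos.mpr Fintype.card_pos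
  have hK : 0 < N * (lam + μ) := by positivity
  have hS : 0 ≤ W + T := nonneg_of_mul_nonneg_right
    ((sum_nonneg fun i _ => sq_nonneg ‖g i‖).trans hg) (by positivity)
  have hu_sq : N * (lam + μ) * (N * (lam + μ) * ‖u‖ ^ 2)
      ≤ N * (lam + μ) * (lam / 4 * (W + T)) := by
    calc N * (lam + μ) * (N * (lam + μ) * ‖u‖ ^ 2) = ‖∑ i, g i‖ ^ 2 := by
          rw [hu, norm_smul, Real.norm_eq_abs, abs_of_pos hK]; ring
      _ ≤ N * ∑ i, ‖g i‖ ^ 2 := norm_sum_sq_le_card_mul_sum_norm_sq g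
      _ ≤ N * (lam ^ 2 / 4 * (W + T)) := by gcongr
      _ ≤ N * (lam + μ) * (lam / 4 * (W + T)) := by
        rw [mul_assoc]
        exact mul_le_mul_of_nonneg_left
          (by nlinarith [mul_nonneg hμ (mul_nonneg hlam.le hS)]) hN.le
  have hu_le := mul_le_mul_of_nonneg_left (le_of_mul_le_mul_left hu_sq hK) hlam.le
  -- Young's inequality with weight `lam / 2` for `d` and `lam` for `g`: with these weights
  -- the constants add up exactly.
  have hdw := two_mul_sum_inner_le d w (lam / 2)
  have hgw := two_mul_sum_inner_le g w lam
  rw [← mul_le_mul_iff_right₀ hlam]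
  simp only [inner_add_left, sum_add_distrib]
  linarith

-- `G i` and `GF` play the roles of `∇f_i` and `∇f`, so `GF a - G i a` is `∇h_i(a)`;
-- `z`, `v`, `v'` are `x^{r+1}`, `v^r`, `v^{r+1}`.
lemma sum_sub_le_sdane_round [Nonempty ι] (hlam : 0 < lam) (hμ : 0 ≤ μ)
    (hconv : ∀ i a b, φ i a + ⟪G i a, b - a⟫ + μ / 2 * ‖a - b‖ ^ 2 ≤ φ i b)
    (hGF : ∀ y, ∑ i, (G i y - GF y) = 0)
    (hSOD : ∀ a b, (1 / (Fintype.card ι : ℝ)) * ∑ i, ‖(GF a - G i a) - (GF b - G i b)‖ ^ 2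
      ≤ lam ^ 2 / 4 * ‖a - b‖ ^ 2)
    {x : ι → E} {z v v' : E} (hz : ∑ i, (x i - z) = 0)
    (hv' : v' = (lam + μ)⁻¹ •
      (lam • v + μ • z - (1 / (Fintype.card ι : ℝ)) • ∑ i, G i (x i)))
    (hacc : ∑ i, ‖G i (x i) + GF v - G i v + lam • (x i - v)‖ ^ 2
      ≤ lam ^ 2 / 4 * ∑ i, ‖x i - v‖ ^ 2) (y : E) :
    ∑ i, φ i z - ∑ i, φ i y
      ≤ Fintype.card ι * (lam / 2 * ‖v - y‖ ^ 2 - (lam + μ) / 2 * ‖v' - y‖ ^ 2) := by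
  have hN : (0 : ℝ) < Fintype.card ι := Nat.cast_pos.mpr Fintype.card_pos
  -- the residual `∇F_{i,r}(x_{i,r+1})` of the local subproblem
  obtain ⟨g, hg⟩ : ∃ g : ι → E, ∀ i, g i = G i (x i) + GF v - G i v + lam • (x i - v) :=
    ⟨_, fun _ => rfl⟩
  simp only [← hg] at hacc
  have hsum_g := sum_eq_card_mul_smul_sub hGF hz hg Fintype.card_ne_zero (by positivity) hv'
  have hS := sum_norm_sub_sq_of_sum_sub_eq_zero x hz v
  have hSy := sum_norm_sub_sq_of_sum_sub_eq_zero x hz y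
  have hd : ∑ i, ‖(GF z - G i z) - (GF v - G i v)‖ ^ 2
      ≤ lam ^ 2 / 4 * (Fintype.card ι * ‖z - v‖ ^ 2) := by
    have := mul_le_mul_of_nonneg_left (hSOD z v) hN.le
    rwa [← mul_assoc, mul_one_div_cancel hN.ne', one_mul, mul_left_comm] at this
  have herr := sum_inner_add_le hlam hμ hd (hS ▸ hacc) hsum_g
  have hpolar : ∑ i, ⟪x i - v, x i - y⟫
      = (∑ i, ‖x i - v‖ ^ 2 + ∑ i, ‖x i - y‖ ^ 2 - Fintype.card ι * ‖v - y‖ ^ 2) / 2 := by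
    simp only [real_inner_sub_sub_eq, ← sum_div, sum_sub_distrib, sum_add_distrib, sum_const,
      card_univ, nsmul_eq_mul]
  have hW : 0 ≤ μ * ∑ i, ‖x i - z‖ ^ 2 := mul_nonneg hμ (by positivity)
  have hconv_sum := sum_sub_le_of_strongConvex hconv x z y
  rw [sum_inner_sub_sum_inner_eq hGF hz hg y, hsum_g, real_inner_smul_left,
    real_inner_sub_sub_eq z v' y, hpolar, hS, hSy] at hconv_sum
  linarith

end Round

section Gradient

variable {E : Type*} [NormedAddCommGroup E] [InnerProductSpace ℝ E] [CompleteSpace E]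
  {ι : Type*} [Fintype ι]

lemma gradient_fun_sub {f g : E → ℝ} {x : E} (hf : DifferentiableAt ℝ f x)
    (hg : DifferentiableAt ℝ g x) :
    gradient (fun y => f y - g y) x = gradient f x - gradient g x := by
  simp only [gradient, fderiv_fun_sub hf hg, map_sub]

lemma gradient_const_mul_sum {f : ι → E → ℝ} {x : E} (hf : ∀ i, DifferentiableAt ℝ (f i) x)
    (c : ℝ) :
    gradient (fun y => c * ∑ i, f i y) x = c • ∑ i, gradient (f i) x := by
  simp only [gradient, fderiv_const_mul (DifferentiableAt.fun_sum fun i _ => hf i),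
    fderiv_fun_sum fun i _ => hf i, map_smul, map_sum]

lemma add_inner_gradient_le_of_strongConvex {φ : ι → E → ℝ} {f : E → ℝ} {c μ : ℝ} {a : E}
    (hdiff : ∀ i, DifferentiableAt ℝ (φ i) a) (hf : f = fun x => c * ∑ i, φ i x)
    (hc : 0 ≤ c) (hμ : 0 ≤ μ)
    (hconv : ∀ i b, φ i a + ⟪gradient (φ i) a, b - a⟫ + μ / 2 * ‖a - b‖ ^ 2 ≤ φ i b)
    (b : E) : f a + ⟪gradient f a, b - a⟫ ≤ f b := by
  have hsum := sum_le_sum fun i (_ : i ∈ univ) =>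
    (le_add_of_nonneg_right (by positivity)).trans (hconv i b)
  rw [sum_add_distrib, ← sum_inner] at hsum
  rw [hf, gradient_const_mul_sum hdiff, real_inner_smul_left, ← mul_add]
  exact mul_le_mul_of_nonneg_left hsum hc

lemma sdane_descent {n : ℕ} (hn : 0 < n) {φ : Fin n → E → ℝ}
    (hdiff : ∀ i, Differentiable ℝ (φ i)) {f : E → ℝ}
    (hf : f = fun x => (1 / (n : ℝ)) * ∑ i, φ i x) {μ lam : ℝ} (hlam : 0 < lam) (hμ : 0 ≤ μ)
    (hconv : ∀ i a b, φ i a + ⟪gradient (φ i) a, b - a⟫ + μ / 2 * ‖a - b‖ ^ 2 ≤ φ i b)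
    (hSOD : ∀ a b, (1 / (n : ℝ)) * ∑ i, ‖gradient (fun z => f z - φ i z) a
      - gradient (fun z => f z - φ i z) b‖ ^ 2 ≤ lam ^ 2 / 4 * ‖a - b‖ ^ 2)
    {x : Fin n → E} {z v v' : E} (hz : z = (1 / (n : ℝ)) • ∑ i, x i)
    (hv' : v' = (lam + μ)⁻¹ • (lam • v + μ • z - (1 / (n : ℝ)) • ∑ i, gradient (φ i) (x i)))
    (hacc : ∑ i, ‖gradient (φ i) (x i) + gradient f v - gradient (φ i) v + lam • (x i - v)‖ ^ 2
      ≤ lam ^ 2 / 4 * ∑ i, ‖x i - v‖ ^ 2) (y : E) :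
    f z - f y ≤ lam / 2 * ‖v - y‖ ^ 2 - (lam + μ) / 2 * ‖v' - y‖ ^ 2 := by
  have : Nonempty (Fin n) := ⟨⟨0, hn⟩⟩
  have hN : (0 : ℝ) < n := Nat.cast_pos.mpr hn
  have hgrad : ∀ a, gradient f a = (1 / (n : ℝ)) • ∑ i, gradient (φ i) a := fun a => by
    rw [hf]; exact gradient_const_mul_sum (fun i => hdiff i a) _
  have hfd : Differentiable ℝ f := by rw [hf]; fun_prop
  have hGF : ∀ a, ∑ i, (gradient (φ i) a - gradient f a) = 0 := fun a => by
    simpa [hgrad] using sum_sub_smul_sum_eq_zero fun i => gradient (φ i) a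
  have hround := sum_sub_le_sdane_round (z := z) (v' := v') hlam hμ hconv hGF
    (fun a b => by
      simpa only [Fintype.card_fin, gradient_fun_sub (hfd _) (hdiff _ _)] using hSOD a b)
    (by simpa [hz] using sum_sub_smul_sum_eq_zero x) (by rwa [Fintype.card_fin]) hacc y
  rw [Fintype.card_fin] at hround
  rw [hf, ← mul_sub, one_div, inv_mul_le_iff₀ hN]
  exact hround

end Gradient

theorem sdane_communication_rounds_general
    {E : Type*} [NormedAddCommGroup E] [InnerProductSpace ℝ E] [CompleteSpace E]
    (n : ℕ) (hn : 0 < n)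
    (f' : Fin n → E → ℝ) (hdiff : ∀ i, Differentiable ℝ (f' i))
    (f : E → ℝ) (hfdef : f = fun x => (1 / (n : ℝ)) * ∑ i, f' i x)
    (μ : ℝ) (hμ : 0 < μ)
    (hconv : ∀ i, ∀ x y : E,
      f' i y ≥ f' i x + ⟪gradient (f' i) x, y - x⟫ + (μ / 2) * ‖x - y‖ ^ 2)
    (δ : ℝ) (hδ : 0 < δ)
    (hSOD : ∀ x y : E,
      (1 / (n : ℝ)) * ∑ i, ‖gradient (fun z => f z - f' i z) x
          - gradient (fun z => f z - f' i z) y‖ ^ 2 ≤ δ ^ 2 * ‖x - y‖ ^ 2)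
    (lam : ℝ) (hlam : lam = 2 * δ)
    (x v : ℕ → E) (xi : Fin n → ℕ → E)
    (hv0 : v 0 = x 0)
    (hxrec : ∀ r, x (r + 1) = (1 / (n : ℝ)) • ∑ i, xi i r)
    (hvrec : ∀ r, v (r + 1) = (lam + μ)⁻¹ •
      (lam • v r + μ • x (r + 1) - (1 / (n : ℝ)) • ∑ i, gradient (f' i) (xi i r)))
    (hacc : ∀ r, ∑ i, ‖gradient (f' i) (xi i r) + gradient f (v r)
          - gradient (f' i) (v r) + lam • (xi i r - v r)‖ ^ 2
      ≤ (lam ^ 2 / 4) * ∑ i, ‖xi i r - v r‖ ^ 2)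
    (xstar : E)
    (D : ℝ) (hD : D = ‖x 0 - xstar‖)
    (p : ℝ) (hp : p = 1 + μ / lam)
    (xbar : ℕ → E)
    (hxbar : ∀ R, xbar R = (∑ r ∈ Icc 1 R, p ^ r)⁻¹ • ∑ r ∈ Icc 1 R, p ^ r • x r) :
    ∀ ε : ℝ, 0 < ε → ∀ R : ℕ, 1 ≤ R →
      ((μ + 2 * δ) / μ) * Real.log (1 + μ * D ^ 2 / (2 * ε)) ≤ (R : ℝ) →
      f (xbar R) - f xstar ≤ ε := by
  intro ε hε R hR hrounds
  have hlam0 : 0 < lam := by rw [hlam]; positivity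
  have hp1 : 1 < p := by rw [hp]; simp only [lt_add_iff_pos_right]; positivity
  have hdesc : ∀ r, f (x (r + 1)) - f xstar
      ≤ lam / 2 * ‖v r - xstar‖ ^ 2 - (lam + μ) / 2 * ‖v (r + 1) - xstar‖ ^ 2 := fun r =>
    sdane_descent hn hdiff hfdef hlam0 hμ.le hconv
      (fun a b => (hSOD a b).trans_eq (by rw [hlam]; ring)) (hxrec r) (hvrec r) (hacc r) xstar
  have hrate := weighted_average_rate (fun a => add_inner_gradient_le_of_strongConvex
      (fun i => hdiff i a) hfdef (by positivity) hμ.le (hconv · a)) hlam0 hμ.le hp hdesc hR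
  rw [← hxbar, hv0, ← hD] at hrate
  have hratio : p / (p - 1) = (μ + 2 * δ) / μ := by
    rw [hp, ← hlam, add_sub_cancel_left]; field_simp; ring
  have hpow : 1 + μ * D ^ 2 / (2 * ε) ≤ p ^ R :=
    le_pow_of_mul_log_le hp1 (by positivity) (hratio ▸ hrounds)
  have hpR : 0 < p ^ R - 1 := sub_pos.mpr (one_lt_pow₀ hp1 (by omega))
  have hD2 : μ * D ^ 2 ≤ (p ^ R - 1) * (2 * ε) :=
    (div_le_iff₀ (by positivity)).mp (by linarith)
  exact le_of_mul_le_mul_left (by linarith) hpR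

/-- S-DANE with full client participation, strongly convex case:
if `R ≥ ((μ + 2δ)/μ) · ln(1 + μD²/(2ε))` then `f(x̄^R) − f(x*) ≤ ε`. -/
theorem sdane_communication_rounds
    {E : Type*} [NormedAddCommGroup E] [InnerProductSpace ℝ E] [CompleteSpace E]
    (n : ℕ) (hn : 0 < n)
    (f' : Fin n → E → ℝ) (hdiff : ∀ i, Differentiable ℝ (f' i))
    (f : E → ℝ) (hfdef : f = fun x => (1 / (n : ℝ)) * ∑ i, f' i x)
    (μ : ℝ) (hμ : 0 < μ)
    (hconv : ∀ i, ∀ x y : E,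
      f' i y ≥ f' i x + ⟪gradient (f' i) x, y - x⟫ + (μ / 2) * ‖x - y‖ ^ 2)
    (δ : ℝ) (hδ : 0 < δ)
    (hSOD : ∀ x y : E,
      (1 / (n : ℝ)) * ∑ i, ‖gradient (fun z => f z - f' i z) x
          - gradient (fun z => f z - f' i z) y‖ ^ 2 ≤ δ ^ 2 * ‖x - y‖ ^ 2)
    (lam : ℝ) (hlam : lam = 2 * δ)
    (x v : ℕ → E) (xi : Fin n → ℕ → E)
    (hv0 : v 0 = x 0)
    (hxrec : ∀ r, x (r + 1) = (1 / (n : ℝ)) • ∑ i, xi i r)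
    (hvrec : ∀ r, v (r + 1) = (lam + μ)⁻¹ •
      (lam • v r + μ • x (r + 1) - (1 / (n : ℝ)) • ∑ i, gradient (f' i) (xi i r)))
    (hacc : ∀ r, ∑ i, ‖gradient (f' i) (xi i r) + gradient f (v r)
          - gradient (f' i) (v r) + lam • (xi i r - v r)‖ ^ 2
      ≤ (lam ^ 2 / 4) * ∑ i, ‖xi i r - v r‖ ^ 2)
    (xstar : E) (hstar : ∀ y, f xstar ≤ f y)
    (D : ℝ) (hD : D = ‖x 0 - xstar‖)
    (p : ℝ) (hp : p = 1 + μ / lam)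
    (xbar : ℕ → E)
    (hxbar : ∀ R, xbar R = (∑ r ∈ Icc 1 R, p ^ r)⁻¹ • ∑ r ∈ Icc 1 R, p ^ r • x r) :
    ∀ ε : ℝ, 0 < ε → ∀ R : ℕ, 1 ≤ R →
      ((μ + 2 * δ) / μ) * Real.log (1 + μ * D ^ 2 / (2 * ε)) ≤ (R : ℝ) →
      f (xbar R) - f xstar ≤ ε :=
  sdane_communication_rounds_general n hn f' hdiff f hfdef μ hμ hconv δ hδ hSOD lam hlam x v xi hv0
    hxrec hvrec hacc xstar D hD p hp xbar hxbar
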